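/- arXiv:1612.07711 — 5 statements merged into one kernel-verified Lean document; each statement's English description precedes it below -/
import Mathlib

section
/- Let H be the quaternion algebra (−1,−5/ℚ) and ‡ the involution negating only the ij coefficient. The ℤ-module O₁ = ℤ ⊕ ℤi ⊕ ℤj ⊕ ℤ·(5+5i+3j−ij)/10 ⊂ H is closed under multiplication (it is an order), and O₁ ∩ O₁^‡ = ℤ ⊕ ℤi ⊕ ℤj ⊕ ℤ·(1+i+j+ij)/2. -/
open Quaternion

/-- The map `‡` on `(−1,−5 / ℚ)` negating only the `ij`-coefficient, as a
`ℤ`-linear map. -/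
def ddagL : ℍ[ℚ, -1, -5] →ₗ[ℤ] ℍ[ℚ, -1, -5] where
  toFun q := ⟨q.re, q.imI, q.imJ, -q.imK⟩
  map_add' a b := by ext <;> simp <;> ring
  map_smul' n a := by ext <;> simp <;> ring

noncomputable section

/-- The order `O₁ = ℤ ⊕ ℤi ⊕ ℤj ⊕ ℤ·(5+5i+3j−ij)/10`. -/
def O₁ : Submodule ℤ ℍ[ℚ, -1, -5] :=
  Submodule.span ℤ {(1 : ℍ[ℚ, -1, -5]),
    ⟨0, 1, 0, 0⟩, ⟨0, 0, 1, 0⟩, ⟨1/2, 1/2, 3/10, -1/10⟩}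

/-- `ℤ ⊕ ℤi ⊕ ℤj ⊕ ℤ·(1+i+j+ij)/2`. -/
def O₁' : Submodule ℤ ℍ[ℚ, -1, -5] :=
  Submodule.span ℤ {(1 : ℍ[ℚ, -1, -5]),
    ⟨0, 1, 0, 0⟩, ⟨0, 0, 1, 0⟩, ⟨1/2, 1/2, 1/2, 1/2⟩}

/-!
Membership in a lattice `ℤ + ℤi + ℤj + ℤv` with `v.imK ≠ 0` is a list of integrality conditions:
`d = q.imK / v.imK` and the `1, i, j`-coordinates of `q - d • v` must be integers. For `O₁` and
`q = r + xi + yj + k·ij` these read `10k, r + 5k, x + 5k, y + 3k ∈ ℤ`, so closure under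
multiplication is a finite check on products of generators. An element of `O₁ ∩ O₁^‡` also has
`y - 3k ∈ ℤ`, hence `6k ∈ ℤ` and `2k = 2·6k - 10k ∈ ℤ`, which together with the rest are the
conditions for `O₁'`.
-/

theorem Submodule.mem_span_four {R M : Type*} [Semiring R] [AddCommMonoid M] [Module R M]
    {x₁ x₂ x₃ x₄ y : M} :
    y ∈ span R {x₁, x₂, x₃, x₄} ↔ ∃ a b c d : R, y = a • x₁ + b • x₂ + c • x₃ + d • x₄ := by
  simp only [mem_span_insert, mem_span_singleton]
  constructor
  · rintro ⟨a, _, ⟨b, _, ⟨c, _, ⟨d, rfl⟩, rfl⟩, rfl⟩, rfl⟩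
    exact ⟨a, b, c, d, by abel⟩
  · rintro ⟨a, b, c, d, rfl⟩
    exact ⟨a, _, ⟨b, _, ⟨c, _, ⟨d, rfl⟩, rfl⟩, rfl⟩, by abel⟩

open scoped Pointwise in
theorem Submodule.mul_mem_span_of_mul_subset {R A : Type*} [CommSemiring R] [Semiring A]
    [Algebra R A] {s : Set A} (hs : s * s ⊆ (span R s : Set A)) {x y : A}
    (hx : x ∈ span R s) (hy : y ∈ span R s) : x * y ∈ span R s := by
  have hxy := mul_mem_mul hx hy
  rw [span_mul_span] at hxy
  exact span_le.2 hs hxy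

namespace QuaternionAlgebra

variable {K : Type*} [Field K] {c₁ c₂ c₃ : K}

theorem mem_span_one_i_j_iff {v q : QuaternionAlgebra K c₁ c₂ c₃} (hv : v.imK ≠ 0) :
    q ∈ Submodule.span ℤ {1, ⟨0, 1, 0, 0⟩, ⟨0, 0, 1, 0⟩, v} ↔
      q.imK / v.imK ∈ (⊥ : Subring K) ∧ q.re - q.imK / v.imK * v.re ∈ (⊥ : Subring K) ∧
      q.imI - q.imK / v.imK * v.imI ∈ (⊥ : Subring K) ∧
      q.imJ - q.imK / v.imK * v.imJ ∈ (⊥ : Subring K) := by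
  simp only [Submodule.mem_span_four, Subring.mem_bot]
  constructor
  · rintro ⟨a, b, c, d, rfl⟩
    refine ⟨⟨d, ?_⟩, ⟨a, ?_⟩, ⟨b, ?_⟩, ⟨c, ?_⟩⟩ <;> simp [hv]
  · rintro ⟨⟨d, hd⟩, ⟨a, ha⟩, ⟨b, hb⟩, ⟨c, hc⟩⟩
    refine ⟨a, b, c, d, ?_⟩
    rw [← hd] at ha hb hc
    rw [eq_div_iff hv] at hd
    rw [eq_sub_iff_add_eq] at ha hb hc
    ext <;> simp [← ha, ← hb, ← hc, ← hd]

end QuaternionAlgebra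

open QuaternionAlgebra

theorem mem_O₁_iff {q : ℍ[ℚ, -1, -5]} :
    q ∈ O₁ ↔ 10 * q.imK ∈ (⊥ : Subring ℚ) ∧ q.re + 5 * q.imK ∈ (⊥ : Subring ℚ) ∧
      q.imI + 5 * q.imK ∈ (⊥ : Subring ℚ) ∧ q.imJ + 3 * q.imK ∈ (⊥ : Subring ℚ) := by
  rw [O₁, mem_span_one_i_j_iff (by norm_num), ← neg_mem_iff (x := 10 * q.imK)]
  dsimp only
  refine and_congr ?_ (and_congr ?_ (and_congr ?_ ?_)) <;> convert Iff.rfl using 2 <;> ring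

theorem mem_O₁'_iff {q : ℍ[ℚ, -1, -5]} :
    q ∈ O₁' ↔ 2 * q.imK ∈ (⊥ : Subring ℚ) ∧ q.re - q.imK ∈ (⊥ : Subring ℚ) ∧
      q.imI - q.imK ∈ (⊥ : Subring ℚ) ∧ q.imJ - q.imK ∈ (⊥ : Subring ℚ) := by
  rw [O₁', mem_span_one_i_j_iff (by norm_num)]
  dsimp only
  refine and_congr ?_ (and_congr ?_ (and_congr ?_ ?_)) <;> convert Iff.rfl using 2 <;> ring

open scoped Pointwise in
theorem O₁_mul_mem {x y : ℍ[ℚ, -1, -5]} (hx : x ∈ O₁) (hy : y ∈ O₁) : x * y ∈ O₁ := by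
  refine Submodule.mul_mem_span_of_mul_subset (Set.mul_subset_iff.2 ?_) hx hy
  simp only [Set.mem_insert_iff, Set.mem_singleton_iff, forall_eq_or_imp, forall_eq,
    SetLike.mem_coe, ← O₁.eq_1, mem_O₁_iff]
  norm_num

theorem ddagL_apply (q : ℍ[ℚ, -1, -5]) : ddagL q = ⟨q.re, q.imI, q.imJ, -q.imK⟩ := rfl

theorem ddagL_ddagL (q : ℍ[ℚ, -1, -5]) : ddagL (ddagL q) = q := by
  simp [ddagL_apply]

theorem mem_map_ddagL_iff {O : Submodule ℤ ℍ[ℚ, -1, -5]} {q : ℍ[ℚ, -1, -5]} :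
    q ∈ O.map ddagL ↔ ddagL q ∈ O :=
  ⟨by rintro ⟨p, hp, rfl⟩; rwa [ddagL_ddagL], fun h => ⟨_, h, ddagL_ddagL q⟩⟩

theorem Subring.mem_of_eq_add_intCast_mul {R : Type*} [Ring R] {S : Subring R} {x y z : R}
    (n : ℤ) (hx : x ∈ S) (hy : y ∈ S) (hz : z = x + n * y) : z ∈ S :=
  hz ▸ add_mem hx (mul_mem (intCast_mem S n) hy)

open Subring in
theorem O₁_inf_map_ddagL : O₁ ⊓ O₁.map ddagL = O₁' := by
  ext q
  simp only [Submodule.mem_inf, mem_map_ddagL_iff, mem_O₁_iff, mem_O₁'_iff, ddagL_apply]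
  constructor
  · rintro ⟨⟨-, hr, hi, hj⟩, h10, -, -, hj'⟩
    have h6 : 6 * q.imK ∈ (⊥ : Subring ℚ) := mem_of_eq_add_intCast_mul (-1) hj hj' (by ring)
    have h2 : 2 * q.imK ∈ (⊥ : Subring ℚ) := mem_of_eq_add_intCast_mul 2 h10 h6 (by ring)
    exact ⟨h2, mem_of_eq_add_intCast_mul (-3) hr h2 (by ring),
      mem_of_eq_add_intCast_mul (-3) hi h2 (by ring),
      mem_of_eq_add_intCast_mul (-2) hj h2 (by ring)⟩
  · rintro ⟨h2, hr, hi, hj⟩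
    refine ⟨⟨?_, ?_, ?_, ?_⟩, ?_, ?_, ?_, ?_⟩
    · exact mem_of_eq_add_intCast_mul 4 h2 h2 (by ring)
    · exact mem_of_eq_add_intCast_mul 3 hr h2 (by ring)
    · exact mem_of_eq_add_intCast_mul 3 hi h2 (by ring)
    · exact mem_of_eq_add_intCast_mul 2 hj h2 (by ring)
    · exact mem_of_eq_add_intCast_mul (-6) h2 h2 (by ring)
    · exact mem_of_eq_add_intCast_mul (-2) hr h2 (by ring)
    · exact mem_of_eq_add_intCast_mul (-2) hi h2 (by ring)
    · exact mem_of_eq_add_intCast_mul (-1) hj h2 (by ring)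

/-- `O₁` is closed under multiplication (it is an order), and
`O₁ ∩ O₁^‡ = ℤ ⊕ ℤi ⊕ ℤj ⊕ ℤ·(1+i+j+ij)/2`. -/
theorem stmt_1 :
    (∀ x ∈ O₁, ∀ y ∈ O₁, x * y ∈ O₁) ∧
    O₁ ⊓ O₁.map ddagL = O₁' :=
  ⟨fun _ hx _ hy => O₁_mul_mem hx hy, O₁_inf_map_ddagL⟩

end
end

section
/- Let F be a field of char ≠ 2, V a 2-dimensional F-vector space with nondegenerate symmetric bilinear form b and quadratic form q(v) = b(v,v), and ‡ the adjoint involution on End(V). If g ∈ GL(V) satisfies g^‡ g ∈ F·id, then q(gv) = ε·det(g)·q(v) for all v ∈ V, where ε = ±1. -/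
/-!
Write `g^‡ g = c`. Then `q(g v) = b(g^‡ g v, v) = c q(v)`, so it suffices that `c = ±det g`.
The Gram matrix `G` of `b` satisfies `Aᵀ G = G M` for the matrices `A`, `M` of `g^‡`, `g`, so
nondegeneracy gives `det g^‡ = det g`; taking determinants of `g^‡ g = c` in dimension 2 then
gives `(det g)² = c²`.
-/

namespace LinearMap.BilinForm

theorem apply_apply_self_eq_mul_of_adjoint_mul_eq {R M : Type*} [CommSemiring R]
    [AddCommMonoid M] [Module R M] {b : LinearMap.BilinForm R M} {f g : Module.End R M}
    (hfg : ∀ v w, b v (g w) = b (f v) w) {c : R} (hc : f * g = c • 1) (v : M) :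
    b (g v) (g v) = c * b v v := by
  rw [hfg, ← Module.End.mul_apply, hc]
  simp

variable {K V : Type*} [Field K] [AddCommGroup V] [Module K V]

theorem det_eq_det_of_adjoint [FiniteDimensional K V] {b : LinearMap.BilinForm K V}
    (hb : b.Nondegenerate) {f g : Module.End K V} (hfg : ∀ v w, b v (g w) = b (f v) w) :
    LinearMap.det f = LinearMap.det g := by
  let B := Module.finBasis K V
  have hcomp : b.compLeft f = b.compRight g := by
    ext v w
    exact (hfg v w).symm
  have hgram : (toMatrix B b).det ≠ 0 :=
    Matrix.nondegenerate_iff_det_ne_zero.mp (hb.toMatrix B)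
  have hm := congrArg Matrix.det (congrArg (toMatrix B) hcomp)
  rw [BilinForm.toMatrix_compLeft, BilinForm.toMatrix_compRight, Matrix.det_mul, Matrix.det_mul,
    Matrix.det_transpose, LinearMap.det_toMatrix, LinearMap.det_toMatrix, mul_comm] at hm
  exact mul_left_cancel₀ hgram hm

theorem eq_det_or_eq_neg_det_of_adjoint_mul_eq (hdim : Module.finrank K V = 2)
    {b : LinearMap.BilinForm K V} (hb : b.Nondegenerate) {f g : Module.End K V}
    (hfg : ∀ v w, b v (g w) = b (f v) w) {c : K} (hc : f * g = c • 1) :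
    c = LinearMap.det g ∨ c = -LinearMap.det g := by
  have : FiniteDimensional K V := .of_finrank_eq_succ hdim
  have hdet := congrArg LinearMap.det hc
  rw [Module.End.mul_eq_comp, LinearMap.det_comp, det_eq_det_of_adjoint hb hfg,
    LinearMap.det_smul, hdim, map_one, mul_one, ← sq] at hdet
  exact sq_eq_sq_iff_eq_or_eq_neg.mp hdet.symm

end LinearMap.BilinForm

theorem stmt_6_general (F V : Type*) [Field F]
    [AddCommGroup V] [Module F V] (hdim : Module.finrank F V = 2)
    (b : LinearMap.BilinForm F V)
    (hnd : b.Nondegenerate)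
    (dag : Module.End F V → Module.End F V)
    (hadj : ∀ (σ : Module.End F V) (v w : V), b v (σ w) = b (dag σ v) w)
    (g : Module.End F V)
    (hscalar : ∃ c : F, dag g * g = c • (1 : Module.End F V)) :
    ∃ ε : F, (ε = 1 ∨ ε = -1) ∧
      ∀ v : V, b (g v) (g v) = ε * LinearMap.det g * b v v := by
  obtain ⟨c, hc⟩ := hscalar
  have hq := LinearMap.BilinForm.apply_apply_self_eq_mul_of_adjoint_mul_eq (hadj g) hc
  rcases LinearMap.BilinForm.eq_det_or_eq_neg_det_of_adjoint_mul_eq hdim hnd (hadj g) hc with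
    rfl | rfl
  · exact ⟨1, .inl rfl, fun v => by rw [hq, one_mul]⟩
  · exact ⟨-1, .inr rfl, fun v => by rw [hq, neg_one_mul]⟩

/-- If `‡` is the adjoint involution of a nondegenerate symmetric bilinear
form `b` on a 2-dimensional space `V`, `q(v) = b(v,v)`, and `g ∈ GL(V)` has
`g^‡ g` scalar, then `q(gv) = ε·det(g)·q(v)` for all `v`, with `ε = ±1`. -/
theorem stmt_6 (F V : Type*) [Field F] (hchar : (2 : F) ≠ 0)
    [AddCommGroup V] [Module F V] (hdim : Module.finrank F V = 2)
    (b : LinearMap.BilinForm F V)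
    (hsymm : ∀ v w : V, b v w = b w v)
    (hnd : b.Nondegenerate)
    (dag : Module.End F V → Module.End F V)
    (hadj : ∀ (σ : Module.End F V) (v w : V), b v (σ w) = b (dag σ v) w)
    (g : Module.End F V) (hg : IsUnit g)
    (hscalar : ∃ c : F, dag g * g = c • (1 : Module.End F V)) :
    ∃ ε : F, (ε = 1 ∨ ε = -1) ∧
      ∀ v : V, b (g v) (g v) = ε * LinearMap.det g * b v v :=
  stmt_6_general F V hdim b hnd dag hadj g hscalar
end

section
/- Let F be a dyadic local field (residue characteristic 2) with ring of integers 𝔬 and maximal ideal 𝔭, and let λ ∈ 𝔬 be square-free (ord(λ) ∈ {0,1}). Consider the quadratic form q(x,y) = x² + λy² on F². If −λ ≡ u² mod 𝔭² for some unit u (i.e., the quadratic defect 𝔡(−λ) ≠ 𝔭), then the lattice 𝔬² is not 𝔬-maximal: there exists a lattice Λ' properly containing 𝔬² with q(Λ') ⊆ 𝔬. -/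
/-!
Let `π` be a uniformiser, so `2 = π t`, and write `-λ - u² = π² s`.
Adjoin `w = (u/π, 1/π)` to `𝔬²`. For `a, b, c ∈ 𝔬`,
`q((a, b) + c w) = a² + λb² + (2/π) c (a u + λ b) + c² (u² + λ)/π²`
`                = a² + λb² + t c (a u + λ b) - s c²`
is integral, while `w ∉ 𝔬²` because `1/π ∉ 𝔬`.
-/

open Submodule

section Lattice

variable {R F : Type*} [CommRing R] [Field F] [Algebra R F]

theorem apply_one_mem_range_of_mem_span_stdBasis {v : Fin 2 → F}
    (hv : v ∈ span R {![(1 : F), 0], ![0, 1]}) : ∃ b : R, v 1 = algebraMap R F b := by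
  obtain ⟨a, b, rfl⟩ := mem_span_pair.mp hv
  exact ⟨b, by simp [Algebra.smul_def]⟩

theorem inv_algebraMap_ne_algebraMap (hinj : Function.Injective (algebraMap R F)) {π : R}
    (hπ0 : π ≠ 0) (hπ : ¬ IsUnit π) (b : R) :
    (algebraMap R F π)⁻¹ ≠ algebraMap R F b := by
  intro h
  have hπF : algebraMap R F π ≠ 0 := (map_ne_zero_iff _ hinj).mpr hπ0
  have hbπ : b * π = 1 := hinj <| by rw [map_mul, ← h, inv_mul_cancel₀ hπF, map_one]
  exact hπ (.of_mul_eq_one_right b hbπ)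

theorem sq_add_lam_mul_sq_eq_algebraMap {π u lam t s : R} (hπ0 : algebraMap R F π ≠ 0)
    (ht : 2 = π * t) (hs : -lam - u ^ 2 = π ^ 2 * s) (a b c : R) :
    (algebraMap R F a + algebraMap R F c * (algebraMap R F u / algebraMap R F π)) ^ 2 +
        algebraMap R F lam * (algebraMap R F b + algebraMap R F c * (algebraMap R F π)⁻¹) ^ 2 =
      algebraMap R F (a ^ 2 + lam * b ^ 2 + t * c * (a * u + lam * b) - s * c ^ 2) := by
  have htF := congrArg (algebraMap R F) ht
  have hsF := congrArg (algebraMap R F) hs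
  simp only [map_ofNat, map_mul, map_sub, map_neg, map_pow] at htF hsF
  simp only [map_add, map_sub, map_mul, map_pow]
  field_simp
  linear_combination
    (algebraMap R F a * algebraMap R F u + algebraMap R F lam * algebraMap R F b) *
        algebraMap R F c * algebraMap R F π * htF -
      algebraMap R F c ^ 2 * hsF

end Lattice

theorem stmt_14_general (R F : Type*) [CommRing R] [IsDomain R]
    [IsDiscreteValuationRing R] [Field F] [Algebra R F] [IsFractionRing R F]
    (hdyadic : ¬ IsUnit (2 : R))
    (lam : R)
    (hdefect : ∃ u : R, IsUnit u ∧
      -lam - u ^ 2 ∈ (IsLocalRing.maximalIdeal R) ^ 2)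
    (q : (Fin 2 → F) → F)
    (hq : ∀ v, q v = v 0 ^ 2 + algebraMap R F lam * v 1 ^ 2) :
    ∃ Λ' : Submodule R (Fin 2 → F), Λ'.FG ∧
      Submodule.span R {![(1 : F), 0], ![0, 1]} < Λ' ∧
      ∀ v ∈ Λ', ∃ r : R, q v = algebraMap R F r := by
  obtain ⟨u, -, hdef⟩ := hdefect
  obtain ⟨π, hπ⟩ := IsDiscreteValuationRing.exists_irreducible R
  have hinj := IsFractionRing.injective R F
  obtain ⟨t, ht⟩ : π ∣ 2 := by
    rwa [← Ideal.mem_span_singleton, ← hπ.maximalIdeal_eq]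
  obtain ⟨s, hs⟩ : π ^ 2 ∣ -lam - u ^ 2 := by
    rwa [hπ.maximalIdeal_eq, Ideal.span_singleton_pow, Ideal.mem_span_singleton] at hdef
  set w : Fin 2 → F := ![algebraMap R F u / algebraMap R F π, (algebraMap R F π)⁻¹]
  refine ⟨span R {![1, 0], ![0, 1], w}, fg_span (Set.toFinite _), ?_, ?_⟩
  · refine SetLike.lt_iff_le_and_exists.mpr
      ⟨span_mono fun x hx ↦ ?_, w, subset_span (by simp), ?_⟩
    · rcases hx with rfl | rfl <;> simp
    · intro hw
      obtain ⟨b, hb⟩ := apply_one_mem_range_of_mem_span_stdBasis hw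
      exact inv_algebraMap_ne_algebraMap hinj hπ.ne_zero hπ.not_isUnit b hb
  · intro v hv
    obtain ⟨a, b, c, rfl⟩ := mem_span_triple.mp hv
    refine ⟨a ^ 2 + lam * b ^ 2 + t * c * (a * u + lam * b) - s * c ^ 2, ?_⟩
    rw [hq]
    simpa [w, Algebra.smul_def] using
      sq_add_lam_mul_sq_eq_algebraMap ((map_ne_zero_iff _ hinj).mpr hπ.ne_zero) ht hs a b c

/-- Over a dyadic local field, for `q(x,y) = x² + λy²` with `λ` square-free:
if `−λ ≡ u² mod 𝔭²` for a unit `u` (quadratic defect ≠ 𝔭), then the lattice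
`𝔬²` is not `𝔬`-maximal: some strictly larger lattice still has integral
`q`-values. -/
theorem stmt_14 (R F : Type*) [CommRing R] [IsDomain R]
    [IsDiscreteValuationRing R] [Field F] [Algebra R F] [IsFractionRing R F]
    (hdyadic : ¬ IsUnit (2 : R))
    (lam : R) (hsqfree : IsUnit lam ∨ Irreducible lam)
    (hdefect : ∃ u : R, IsUnit u ∧
      -lam - u ^ 2 ∈ (IsLocalRing.maximalIdeal R) ^ 2)
    (q : (Fin 2 → F) → F)
    (hq : ∀ v, q v = v 0 ^ 2 + algebraMap R F lam * v 1 ^ 2) :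
    ∃ Λ' : Submodule R (Fin 2 → F), Λ'.FG ∧
      Submodule.span R {![(1 : F), 0], ![0, 1]} < Λ' ∧
      ∀ v ∈ Λ', ∃ r : R, q v = algebraMap R F r :=
  stmt_14_general R F hdyadic lam hdefect q hq
end

section
/- Let F be a local field of char ≠ 2, 𝔬 its ring of integers, and q(x,y) = x² + λy² an anisotropic quadratic form on F² (i.e., −λ is not a square in F). Then Λ_max = {v ∈ F² : q(v) ∈ 𝔬} is an 𝔬-lattice (an 𝔬-submodule that is finitely generated and spans F²), and it is the unique 𝔬-maximal lattice: any lattice Λ with q(Λ) ⊆ 𝔬 is contained in Λ_max. -/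
/-!
Over a complete discretely valued field, Hensel's lemma makes `1 - 4e` a square for every
`e ∈ 𝔪`. So if `q(x, y) ∈ 𝔬` but `2x ∉ 𝔬`, then `1 - q(x, y)/x²` is a square, i.e. `-λ` is a
square; anisotropy therefore forces `2x ∈ 𝔬` (and then `4λy² ∈ 𝔬`), which traps `Λ_max` in a fixed
lattice. For closure under addition write `q(u + w) = q(u) + q(w) + 2B(u, w)`; ordering `u, w` so
that `q(w)/q(u) ∈ 𝔬`, the multiplicativity `B² + λ det(u, w)² = q(u) q(w)` of the norm form puts
`(B, det(u, w))/q(u)` in `Λ_max`, whence `2B ∈ q(u)𝔬 ⊆ 𝔬`.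
-/

open IsLocalRing Polynomial

theorem HenselianRing.isSquare_one_sub_four_mul {R : Type*} [CommRing R] {I : Ideal R}
    [HenselianRing R I] {e : R} (he : e ∈ I) : IsSquare (1 - 4 * e) := by
  have hmonic : (X ^ 2 - X + C e).Monic := by monicity!
  obtain ⟨c, hc, -⟩ := HenselianRing.is_henselian (I := I) _ hmonic 0 (by simpa using he)
    (by simp)
  simp only [IsRoot, eval_add, eval_sub, eval_pow, eval_X, eval_C] at hc
  exact ⟨1 - 2 * c, by linear_combination (-4) * hc⟩

theorem eq_zero_of_sq_add_mul_sq_eq_zero {F : Type*} [Field F] {lam : F}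
    (haniso : ∀ t : F, t ^ 2 ≠ -lam) {a b : F} (h : a ^ 2 + lam * b ^ 2 = 0) :
    a = 0 ∧ b = 0 := by
  by_cases hb : b = 0
  · subst hb
    exact ⟨pow_eq_zero_iff two_ne_zero |>.mp (by simpa using h), rfl⟩
  · exact absurd (by field_simp; linear_combination h) (haniso (a / b))

section IntegralElements

variable {R F : Type*} [CommRing R] [Field F] [Algebra R F] [IsFractionRing R F]

theorem mem_range_of_sq_mem_range [IsIntegrallyClosed R] {x : F}
    (h : x ^ 2 ∈ (algebraMap R F).range) : x ∈ (algebraMap R F).range := by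
  obtain ⟨r, hr⟩ := h
  exact IsIntegrallyClosed.isIntegral_iff.mp
    (IsIntegral.of_pow two_pos (hr ▸ isIntegral_algebraMap))

theorem exists_mem_maximalIdeal_eq_inv_of_notMem_range [IsDomain R] [ValuationRing R] {x : F}
    (hx : x ∉ (algebraMap R F).range) : ∃ s ∈ maximalIdeal R, algebraMap R F s = x⁻¹ := by
  obtain h | ⟨s, hs⟩ := ValuationRing.isInteger_or_isInteger R x
  · exact absurd h hx
  refine ⟨s, (mem_maximalIdeal _).2 fun hu => hx ⟨↑hu.unit⁻¹, ?_⟩, hs⟩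
  rw [map_units_inv, IsUnit.unit_spec, hs, inv_inv]

end IntegralElements

section AnisotropicBinaryForm

variable {R F : Type*} [CommRing R] [IsDomain R] [ValuationRing R]
  [HenselianRing R (maximalIdeal R)] [Field F] [Algebra R F] [IsFractionRing R F]
  {lam : F}

theorem two_mul_mem_range_of_sq_add_mul_sq_mem_range (haniso : ∀ t : F, t ^ 2 ≠ -lam) {x y : F}
    (h : x ^ 2 + lam * y ^ 2 ∈ (algebraMap R F).range) : 2 * x ∈ (algebraMap R F).range := by
  by_contra h2x
  have h2x0 : 2 * x ≠ 0 := fun h0 => h2x (h0 ▸ zero_mem _)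
  obtain ⟨s, hs, hsx⟩ := exists_mem_maximalIdeal_eq_inv_of_notMem_range h2x
  obtain ⟨r, hr⟩ := h
  have he : r * s ^ 2 ∈ maximalIdeal R :=
    Ideal.mul_mem_left _ r (Ideal.pow_mem_of_mem _ hs 2 two_pos)
  obtain ⟨u, hu⟩ := HenselianRing.isSquare_one_sub_four_mul he
  have hu0 : algebraMap R F u ≠ 0 := by
    have hunit : IsUnit (u * u) :=
      hu ▸ isUnit_one_sub_self_of_mem_nonunits _ (Ideal.mul_mem_left _ 4 he)
    exact ((isUnit_of_mul_isUnit_left hunit).map (algebraMap R F)).ne_zero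
  -- Multiply `1 - 4 r s² = u²` by `x²`, using `s = (2x)⁻¹` and `r = x² + λy²`.
  have hiso : (algebraMap R F u * x) ^ 2 + lam * y ^ 2 = 0 := by
    have h := congrArg (algebraMap R F) hu
    have hs2x : algebraMap R F s * (2 * x) = 1 := hsx ▸ inv_mul_cancel₀ h2x0
    simp only [map_sub, map_mul, map_one, map_pow, map_ofNat] at h
    linear_combination
      (-x ^ 2) * h - algebraMap R F r * (algebraMap R F s * (2 * x) + 1) * hs2x - hr
  exact mul_ne_zero hu0 (right_ne_zero_of_mul h2x0)
    (eq_zero_of_sq_add_mul_sq_eq_zero haniso hiso).1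

theorem two_mul_polar_mem_range_of_div_mem_range (haniso : ∀ t : F, t ^ 2 ≠ -lam) {a b c d : F}
    (hab : a ^ 2 + lam * b ^ 2 ∈ (algebraMap R F).range)
    (h : (c ^ 2 + lam * d ^ 2) / (a ^ 2 + lam * b ^ 2) ∈ (algebraMap R F).range) :
    2 * (a * c + lam * b * d) ∈ (algebraMap R F).range := by
  by_cases hp : a ^ 2 + lam * b ^ 2 = 0
  · obtain ⟨rfl, rfl⟩ := eq_zero_of_sq_add_mul_sq_eq_zero haniso hp
    simp
  -- Brahmagupta: `(ac + λbd)² + λ(ad - bc)² = (a² + λb²)(c² + λd²)`.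
  have hxy := two_mul_mem_range_of_sq_add_mul_sq_mem_range haniso
    (x := (a * c + lam * b * d) / (a ^ 2 + lam * b ^ 2))
    (y := (a * d - b * c) / (a ^ 2 + lam * b ^ 2)) (by convert h using 1; field_simp; ring)
  convert mul_mem hab hxy using 1
  field_simp

theorem two_mul_polar_mem_range (haniso : ∀ t : F, t ^ 2 ≠ -lam) {a b c d : F}
    (hab : a ^ 2 + lam * b ^ 2 ∈ (algebraMap R F).range)
    (hcd : c ^ 2 + lam * d ^ 2 ∈ (algebraMap R F).range) :
    2 * (a * c + lam * b * d) ∈ (algebraMap R F).range := by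
  rcases ValuationRing.isInteger_or_isInteger R ((c ^ 2 + lam * d ^ 2) / (a ^ 2 + lam * b ^ 2))
    with h | h
  · exact two_mul_polar_mem_range_of_div_mem_range haniso hab h
  · rw [inv_div] at h
    convert two_mul_polar_mem_range_of_div_mem_range haniso hcd h using 2
    ring

theorem add_sq_add_mul_add_sq_mem_range (haniso : ∀ t : F, t ^ 2 ≠ -lam) {a b c d : F}
    (hab : a ^ 2 + lam * b ^ 2 ∈ (algebraMap R F).range)
    (hcd : c ^ 2 + lam * d ^ 2 ∈ (algebraMap R F).range) :
    (a + c) ^ 2 + lam * (b + d) ^ 2 ∈ (algebraMap R F).range := by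
  convert add_mem (add_mem hab hcd) (two_mul_polar_mem_range haniso hab hcd) using 1
  ring

end AnisotropicBinaryForm

theorem Submodule.span_eq_top_of_forall_exists_smul_mem {R F M : Type*} [CommRing R] [Field F]
    [Algebra R F] [AddCommGroup M] [Module R M] [Module F M] [IsScalarTower R F M]
    (N : Submodule R M) (h : ∀ v : M, ∃ r : R, algebraMap R F r ≠ 0 ∧ r • v ∈ N) :
    Submodule.span F (N : Set M) = ⊤ := by
  refine eq_top_iff'.2 fun v => ?_
  obtain ⟨r, hr, hv⟩ := h v
  have hv' : v = (algebraMap R F r)⁻¹ • r • v := by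
    rw [← algebraMap_smul F r v, smul_smul, inv_mul_cancel₀ hr, one_smul]
  rw [hv']
  exact Submodule.smul_mem _ _ (Submodule.subset_span hv)

theorem Submodule.fg_of_forall_mul_mem_range {R F ι : Type*} [CommRing R] [IsNoetherianRing R]
    [Field F] [Algebra R F] [Finite ι] (c : ι → F) (hc : ∀ i, c i ≠ 0) (N : Submodule R (ι → F))
    (h : ∀ v ∈ N, ∀ i, c i * v i ∈ (algebraMap R F).range) : N.FG := by
  classical
  have := Fintype.ofFinite ι
  refine (Submodule.fg_span (Set.finite_range fun i => (c i)⁻¹ • Pi.single i 1)).of_le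
    fun v hv => (Submodule.mem_span_range_iff_exists_fun R).2 ?_
  choose r hr using h v hv
  refine ⟨r, funext fun j => ?_⟩
  simp [Finset.sum_apply, Pi.single_apply, Algebra.smul_def, hr]
  field_simp [hc j]

section MaximalLattice

variable (R : Type*) {F : Type*} [CommRing R] [IsDomain R] [ValuationRing R]
  [HenselianRing R (maximalIdeal R)] [Field F] [Algebra R F] [IsFractionRing R F]
  {lam : F} (haniso : ∀ t : F, t ^ 2 ≠ -lam)

def maximalLattice : Submodule R (Fin 2 → F) where
  carrier := {v | v 0 ^ 2 + lam * v 1 ^ 2 ∈ (algebraMap R F).range}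
  add_mem' hu hw := add_sq_add_mul_add_sq_mem_range haniso hu hw
  zero_mem' := by simp
  smul_mem' r v hv := by
    show (r • v) 0 ^ 2 + lam * (r • v) 1 ^ 2 ∈ (algebraMap R F).range
    convert mul_mem (pow_mem (RingHom.mem_range_self _ r) 2) hv using 1
    simp only [Pi.smul_apply, Algebra.smul_def]
    ring

variable {R haniso} in
theorem mem_maximalLattice {v : Fin 2 → F} :
    v ∈ maximalLattice R haniso ↔ v 0 ^ 2 + lam * v 1 ^ 2 ∈ (algebraMap R F).range :=
  Iff.rfl

theorem span_maximalLattice :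
    Submodule.span F (maximalLattice R haniso : Set (Fin 2 → F)) = ⊤ := by
  refine Submodule.span_eq_top_of_forall_exists_smul_mem _ fun v => ?_
  obtain ⟨⟨a, s⟩, hv⟩ := IsLocalization.surj (nonZeroDivisors R) (v 0 ^ 2 + lam * v 1 ^ 2)
  refine ⟨s, IsFractionRing.to_map_ne_zero_of_mem_nonZeroDivisors s.2, ⟨s * a, ?_⟩⟩
  simp only [Pi.smul_apply, Algebra.smul_def, map_mul]
  linear_combination (-algebraMap R F s) * hv

theorem fg_maximalLattice [IsNoetherianRing R] (hchar : (2 : F) ≠ 0) :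
    (maximalLattice R haniso).FG := by
  obtain ⟨⟨a, s⟩, hlam⟩ := IsLocalization.surj (nonZeroDivisors R) lam
  have hs : algebraMap R F s ≠ 0 := IsFractionRing.to_map_ne_zero_of_mem_nonZeroDivisors s.2
  have ha : algebraMap R F a ≠ 0 := by
    rw [← hlam]
    exact mul_ne_zero (fun h => haniso 0 (by simp [h])) hs
  refine Submodule.fg_of_forall_mul_mem_range ![2, 2 * algebraMap R F a]
    (Fin.forall_fin_two.2 ⟨hchar, mul_ne_zero hchar ha⟩) _ fun v hv => Fin.forall_fin_two.2 ?_
  have hx := two_mul_mem_range_of_sq_add_mul_sq_mem_range haniso hv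
  refine ⟨hx, mem_range_of_sq_mem_range ?_⟩
  -- `(2 a y)² = (4 q(v) - (2x)²) · a s` since `a = λ s`.
  convert mul_mem (sub_mem (mul_mem (RingHom.mem_range_self _ 4) hv) (pow_mem hx 2))
    (RingHom.mem_range_self _ (a * s)) using 1
  simp only [Matrix.cons_val_zero, Matrix.cons_val_one, map_ofNat, map_mul]
  linear_combination (-4 * v 1 ^ 2 * algebraMap R F a) * hlam

end MaximalLattice

theorem stmt_15_general (R F : Type*) [CommRing R] [IsDomain R]
    [IsDiscreteValuationRing R]
    [IsAdicComplete (IsLocalRing.maximalIdeal R) R]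
    [Field F] [Algebra R F] [IsFractionRing R F] (hchar : (2 : F) ≠ 0)
    (lam : F)
    (haniso : ∀ t : F, t ^ 2 ≠ -lam)
    (q : (Fin 2 → F) → F)
    (hq : ∀ v, q v = v 0 ^ 2 + lam * v 1 ^ 2) :
    ∃ Λmax : Submodule R (Fin 2 → F),
      (Λmax : Set (Fin 2 → F)) = {v | ∃ r : R, q v = algebraMap R F r} ∧
      Λmax.FG ∧
      Submodule.span F (Λmax : Set (Fin 2 → F)) = ⊤ ∧
      ∀ Λ : Submodule R (Fin 2 → F), (∀ v ∈ Λ, ∃ r : R, q v = algebraMap R F r) →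
        Λ ≤ Λmax := by
  have hcoe : (maximalLattice R haniso : Set (Fin 2 → F)) =
      {v | ∃ r : R, q v = algebraMap R F r} := by
    ext v
    simp only [SetLike.mem_coe, mem_maximalLattice, RingHom.mem_range, hq, eq_comm,
      Set.mem_ofPred_eq]
  refine ⟨maximalLattice R haniso, hcoe, fg_maximalLattice R haniso hchar,
    span_maximalLattice R haniso, fun Λ hΛ v hv => ?_⟩
  rw [← SetLike.mem_coe, hcoe]
  exact hΛ v hv

/-- For an anisotropic form `q(x,y) = x² + λy²` over a (complete) local field,
`Λ_max = {v : q(v) ∈ 𝔬}` is an `𝔬`-lattice and is the unique `𝔬`-maximal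
lattice: every lattice with integral `q`-values is contained in it. -/
theorem stmt_15 (R F : Type*) [CommRing R] [IsDomain R]
    [IsDiscreteValuationRing R]
    [IsAdicComplete (IsLocalRing.maximalIdeal R) R]
    [Field F] [Algebra R F] [IsFractionRing R F] (hchar : (2 : F) ≠ 0)
    (lam : F) (hlam : lam ≠ 0)
    (haniso : ∀ t : F, t ^ 2 ≠ -lam)
    (q : (Fin 2 → F) → F)
    (hq : ∀ v, q v = v 0 ^ 2 + lam * v 1 ^ 2) :
    ∃ Λmax : Submodule R (Fin 2 → F),
      (Λmax : Set (Fin 2 → F)) = {v | ∃ r : R, q v = algebraMap R F r} ∧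
      Λmax.FG ∧
      Submodule.span F (Λmax : Set (Fin 2 → F)) = ⊤ ∧
      ∀ Λ : Submodule R (Fin 2 → F), (∀ v ∈ Λ, ∃ r : R, q v = algebraMap R F r) →
        Λ ≤ Λmax :=
  stmt_15_general R F hchar lam haniso q hq
end

section
/- Let F be a field of char ≠ 2 with a quaternion algebra H, standard involution (conjugation) x ↦ x̄, and an orthogonal involution ‡. Then for x ∈ H^×, x^‡ x ∈ F if and only if x^‡ = x̄ or x^‡ = −x̄. -/
open Quaternion

/-!
If `x` is a unit and `x^‡ x = c` is a scalar, then comparing with `x̄ x = nrd x ≠ 0` gives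
`x^‡ = t x̄` for the scalar `t = c / nrd x`. Applying `‡` once more and using `x̄ = s - x` with
`s ∈ F` yields `(1 - t²) x = (t - t²) s`, so either `t = ±1` or `x` is itself a scalar, in which
case `x^‡ = x = x̄`.
-/

section AntiInvolution

variable {R A : Type*} [CommSemiring R] [Semiring A] [Algebra R A]

theorem map_one_of_antiMul_involutive (f : A → A) (hanti : ∀ x y, f (x * y) = f y * f x)
    (hinv : ∀ x, f (f x) = x) : f 1 = 1 := by
  have h := hanti 1 (f 1)
  rwa [one_mul, hinv, one_mul, eq_comm] at h

theorem LinearMap.map_algebraMap_of_map_one (f : A →ₗ[R] A) (h1 : f 1 = 1) (r : R) :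
    f (algebraMap R A r) = algebraMap R A r := by
  rw [Algebra.algebraMap_eq_smul_one, map_smul, h1]

end AntiInvolution

namespace QuaternionAlgebra

variable {F : Type*} [Field F] {c₁ c₂ c₃ : F}

theorem exists_eq_smul_star_of_mul_eq_algebraMap {x y : ℍ[F,c₁,c₂,c₃]} (hx : IsUnit x) {c : F}
    (h : y * x = algebraMap F _ c) : ∃ t : F, y = t • star x := by
  set n := (star x * x).re
  have hn : star x * x = algebraMap F _ n := by rw [coe_algebraMap]; exact star_mul_eq_coe x
  have hn0 : n ≠ 0 := by
    rintro hn0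
    rw [hn0, map_zero, hx.mul_left_eq_zero, star_eq_zero] at hn
    exact hx.ne_zero hn
  refine ⟨c / n, (hx.mul_left_inj).mp ?_⟩
  rw [h, smul_mul_assoc, hn, Algebra.smul_def, ← map_mul, div_mul_cancel₀ c hn0]

theorem eq_star_or_eq_neg_star_of_eq_smul_star (f : ℍ[F,c₁,c₂,c₃] →ₗ[F] ℍ[F,c₁,c₂,c₃])
    (hinv : ∀ x, f (f x) = x) (hscalar : ∀ r : F, f (algebraMap F _ r) = algebraMap F _ r)
    {x : ℍ[F,c₁,c₂,c₃]} {t : F} (hfx : f x = t • star x) :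
    f x = star x ∨ f x = -star x := by
  by_cases htt : t * t = 1
  · rcases mul_self_eq_one_iff.mp htt with rfl | rfl <;> simp [hfx]
  set s := 2 * x.re + c₂ * x.imI
  have hstar : star x = algebraMap F _ s - x := by rw [coe_algebraMap]; exact star_eq_two_re_sub x
  have hlin : (1 - t * t) • x = (t - t * t) • algebraMap F _ s := by
    have h := hinv x
    rw [hfx, map_smul, hstar, map_sub, hscalar, hfx, hstar] at h
    rw [← sub_eq_zero, ← sub_eq_zero.mpr h.symm]
    module
  have hx : x = algebraMap F _ ((1 - t * t)⁻¹ * (t - t * t) * s) := by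
    have h1 : 1 - t * t ≠ 0 := fun h => htt (by linear_combination -h)
    rw [map_mul, ← Algebra.smul_def, ← smul_smul, ← hlin, smul_smul, inv_mul_cancel₀ h1, one_smul]
  left
  rw [hx, hscalar, coe_algebraMap, star_coe]

end QuaternionAlgebra

theorem stmt_18_general (F : Type*) [Field F]
    (a b : F)
    (f : ℍ[F, a, b] →ₗ[F] ℍ[F, a, b])
    (hanti : ∀ x y : ℍ[F, a, b], f (x * y) = f y * f x)
    (hinv : ∀ x : ℍ[F, a, b], f (f x) = x) :
    ∀ x : ℍ[F, a, b], IsUnit x →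
      ((∃ c : F, f x * x = algebraMap F ℍ[F, a, b] c) ↔
        f x = star x ∨ f x = -star x) := by
  have hscalar := f.map_algebraMap_of_map_one (map_one_of_antiMul_involutive f hanti hinv)
  intro x hx
  constructor
  · rintro ⟨c, hc⟩
    obtain ⟨t, ht⟩ := QuaternionAlgebra.exists_eq_smul_star_of_mul_eq_algebraMap hx hc
    exact QuaternionAlgebra.eq_star_or_eq_neg_star_of_eq_smul_star f hinv hscalar ht
  · have hnrd := QuaternionAlgebra.star_mul_eq_coe x
    rintro (h | h)
    · exact ⟨(star x * x).re, by rw [h, hnrd]; rfl⟩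
    · exact ⟨-(star x * x).re, by rw [h, neg_mul, hnrd, map_neg]; rfl⟩

/-- For a quaternion algebra `H` over a field of characteristic ≠ 2 with an
orthogonal involution `‡`, a unit `x` satisfies `x^‡ x ∈ F` iff
`x^‡ = x̄` or `x^‡ = −x̄`. -/
theorem stmt_18 (F : Type*) [Field F] (hchar : (2 : F) ≠ 0)
    (a b : F) (ha : a ≠ 0) (hb : b ≠ 0)
    (f : ℍ[F, a, b] →ₗ[F] ℍ[F, a, b])
    (hanti : ∀ x y : ℍ[F, a, b], f (x * y) = f y * f x)
    (hinv : ∀ x : ℍ[F, a, b], f (f x) = x)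
    (horth : ∃ y : ℍ[F, a, b], f y ≠ star y) :
    ∀ x : ℍ[F, a, b], IsUnit x →
      ((∃ c : F, f x * x = algebraMap F ℍ[F, a, b] c) ↔
        f x = star x ∨ f x = -star x) :=
  stmt_18_general F a b f hanti hinv
end
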